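/- The largest eigenvalue μ of the Laplacian matrix of the graph G strictly exceeds max over all vertices v of G of m_v²/d_v + m_v. (This gives a counterexample to conjectured bound 3 of Brankov, Hansen and Stevanović.) -/

import Mathlib

/-- The edge list of the graph. -/
def edgeList : List (Fin 12 × Fin 12) :=
  [(0,3),(0,4),(0,8),(1,2),(1,3),(1,8),(1,10),(2,5),(2,7),(2,11),(3,7),(3,11),(4,6),(4,7),(5,8),(5,9),(6,9),(6,10),(7,10),(9,11),(10,11)]

/-- The graph under consideration. -/
def G : SimpleGraph (Fin 12) where
  Adj v w := (v, w) ∈ edgeList ∨ (w, v) ∈ edgeList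
  symm := ⟨fun _ _ h => h.symm⟩
  loopless := ⟨by intro v; fin_cases v <;> decide⟩

instance : DecidableRel G.Adj :=
  fun v w => inferInstanceAs (Decidable ((v, w) ∈ edgeList ∨ (w, v) ∈ edgeList))

/-- `d v` is the degree of the vertex `v`, as a real number. -/
noncomputable def d (v : Fin 12) : ℝ := G.degree v

/-- `m v` is the average of the degrees of the neighbours of `v`. -/
noncomputable def m (v : Fin 12) : ℝ :=
  (∑ u ∈ G.neighborFinset v, (G.degree u : ℝ)) / d v
noncomputable def sq2 : ℝ := Real.sqrt 2

def Lint : Matrix (Fin 12) (Fin 12) ℤ :=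
  !![3,0,0,-1,-1,0,0,0,-1,0,0,0; 0,4,-1,-1,0,0,0,0,-1,0,-1,0; 0,-1,4,0,0,-1,0,-1,0,0,0,-1; -1,-1,0,4,0,0,0,-1,0,0,0,-1; -1,0,0,0,3,0,-1,-1,0,0,0,0; 0,0,-1,0,0,3,0,0,-1,-1,0,0; 0,0,0,0,-1,0,3,0,0,-1,-1,0; 0,0,-1,-1,-1,0,0,4,0,0,-1,0; -1,-1,0,0,0,-1,0,0,3,0,0,0; 0,0,0,0,0,-1,-1,0,0,3,0,-1; 0,-1,0,0,0,0,-1,-1,0,0,4,-1; 0,0,-1,-1,0,0,0,0,0,-1,-1,4]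

lemma lint_eq : G.lapMatrix ℤ = Lint := by decide

lemma lap_cast : G.lapMatrix ℝ = fun i j => ((Lint i j : ℤ) : ℝ) := by
  funext i j
  rw [← lint_eq]
  simp only [SimpleGraph.lapMatrix, SimpleGraph.degMatrix, SimpleGraph.adjMatrix,
    Matrix.sub_apply, Matrix.of_apply, Matrix.diagonal_apply]
  split_ifs <;> push_cast <;> norm_num

def av : Fin 12 → ℤ := ![-1,1,-1,-1,1,-1,-1,1,1,1,-1,1]
def bv : Fin 12 → ℤ := ![1,0,0,0,-1,1,1,0,-1,-1,0,0]

lemma hAv : Lint.mulVec av = fun i => 6 * av i + 2 * bv i := by decide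
lemma hBv : Lint.mulVec bv = fun i => av i + 6 * bv i := by decide

noncomputable def xv : Fin 12 → ℝ := fun i => (av i : ℝ) + sq2 * (bv i : ℝ)

lemma hs2 : sq2 * sq2 = 2 := Real.mul_self_sqrt (by norm_num)

lemma eigen : (G.lapMatrix ℝ).mulVec xv = (6 + sq2) • xv := by
  funext i
  rw [lap_cast]
  show ∑ j, ((Lint i j : ℤ) : ℝ) * xv j = (6 + sq2) * xv i
  have h1 : ∑ j, ((Lint i j : ℤ) : ℝ) * xv j
      = ((Lint.mulVec av i : ℤ) : ℝ) + sq2 * ((Lint.mulVec bv i : ℤ) : ℝ) := by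
    simp only [Matrix.mulVec, dotProduct, xv, mul_add]
    push_cast
    rw [Finset.mul_sum, ← Finset.sum_add_distrib]
    exact Finset.sum_congr rfl (fun j _ => by ring)
  rw [h1, hAv, hBv, xv]
  push_cast
  linear_combination (-(bv i : ℝ)) * hs2

lemma mem_spec : (6 + sq2) ∈ spectrum ℝ (G.lapMatrix ℝ) := by
  rw [spectrum.mem_iff]
  intro hu
  set M : Matrix (Fin 12) (Fin 12) ℝ :=
    algebraMap ℝ (Matrix (Fin 12) (Fin 12) ℝ) (6 + sq2) - G.lapMatrix ℝ with hM
  have h0 : M.mulVec xv = 0 := by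
    rw [hM, Matrix.sub_mulVec, eigen, Algebra.algebraMap_eq_smul_one, Matrix.smul_mulVec,
      Matrix.one_mulVec, sub_self]
  have hdet : IsUnit M.det := (Matrix.isUnit_iff_isUnit_det M).mp hu
  have hinv : M⁻¹ * M = 1 := Matrix.nonsing_inv_mul M hdet
  have hzero : xv = 0 := by
    calc xv = (1 : Matrix (Fin 12) (Fin 12) ℝ).mulVec xv := (Matrix.one_mulVec xv).symm
    _ = M⁻¹.mulVec (M.mulVec xv) := by rw [Matrix.mulVec_mulVec, hinv]
    _ = 0 := by rw [h0, Matrix.mulVec_zero]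
  have h1 : xv 1 = 1 := by simp [xv, av, bv]
  rw [hzero] at h1
  simp at h1

def nd (v : Fin 12) : ℕ := G.degree v

def ns (v : Fin 12) : ℕ := ∑ u ∈ G.neighborFinset v, G.degree u

lemma m_eq (v : Fin 12) : m v = (ns v : ℝ) / (nd v : ℝ) := by
  rw [m, d, ns, nd]; push_cast; rfl

lemma d_eq (v : Fin 12) : d v = (nd v : ℝ) := rfl

lemma deg_cases : ∀ v : Fin 12, (nd v = 3 ∧ ns v = 10) ∨ (nd v = 4 ∧ ns v = 15) := by decide

theorem laplacian_spectral_radius_exceeds_bound (μ : ℝ)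
    (hmem : μ ∈ spectrum ℝ (G.lapMatrix ℝ))
    (hmax : ∀ ν ∈ spectrum ℝ (G.lapMatrix ℝ), ν ≤ μ) :
    Finset.univ.sup' Finset.univ_nonempty (fun v => m v ^ 2 / d v + m v) < μ := by
  have hle : 6 + sq2 ≤ μ := hmax _ mem_spec
  have h2 := hs2
  have hnn : 0 ≤ sq2 := Real.sqrt_nonneg 2
  have hlb : (1.27 : ℝ) < sq2 := by nlinarith
  rw [Finset.sup'_lt_iff]
  intro v _
  have key : m v ^ 2 / d v + m v ≤ 465/64 := by
    rcases deg_cases v with ⟨h3, h10⟩ | ⟨h4, h15⟩ <;>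
      rw [m_eq, d_eq] <;> first
      | (rw [h3, h10]; norm_num)
      | (rw [h4, h15]; norm_num)
  nlinarith [key]
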